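/- arXiv:1705.00785 — 2 statements merged into one kernel-verified Lean document; each statement's English description precedes it below -/
import Mathlib

section
/- (Theorem 2) Let z, r, z', r' be real numbers with z² + r² ≤ 1 and z'² + r'² ≤ 1. There exists a finite family {K_n} of incoherent 2×2 complex matrices with ∑_n K_n† K_n = I and ∑_n K_n ρ(z,r) K_n† = ρ(z',r') if and only if r'²·(1 − z²) ≤ r²·(1 − z'²) and |r'| ≤ |r|. -/
open Matrix

/-- A 2×2 complex matrix is incoherent if each of its columns has at most one
nonzero entry. -/
def Incoherent (K : Matrix (Fin 2) (Fin 2) ℂ) : Prop :=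
  ∀ j i i' : Fin 2, K i j ≠ 0 → K i' j ≠ 0 → i = i'

/-- The qubit state `ρ(z,r) = (1/2) [[1+z, r], [r, 1-z]]`. -/
noncomputable def qubit (z r : ℝ) : Matrix (Fin 2) (Fin 2) ℂ :=
  (1 / 2 : ℂ) • !![1 + (z : ℂ), (r : ℂ); (r : ℂ), 1 - (z : ℂ)]

/-!
Write `p = (1 + z) / 2`, `q = (1 - z) / 2` for the populations of `ρ(z,r)`. An incoherent Kraus
operator `K` sends populations to populations, and the coherence `r` enters its output only
through the amplitude `c(K) = K₀₀ K̄₁₁ + K₀₁ K̄₁₀`: the output coherence is `r · Σᵢ c(Kᵢ)`, and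
`|c(K)|² p q` is the product of the two output populations that `K` contributes. Cauchy–Schwarz
against the output populations gives `(Σᵢ |c(Kᵢ)|)² p q ≤ p' q'`, and against the trace condition
`Σᵢ Kᵢᴴ Kᵢ = 1` it gives `Σᵢ |c(Kᵢ)| ≤ 1`; these are the two inequalities.

Conversely, the Kraus pair `diag(a, b)`, `antidiag(c, d)` with `a² + c² = b² + d² = 1` moves `z` and
multiplies `r` by `a b + c d`. If `|z'| ≤ |z|`, mixing the identity with the bit flip reaches `z'`
keeping `r`; if `|z| < |z'|`, a suitable choice reaches `z'` with the largest factor allowed,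
`√((1 - z'²) / (1 - z²))`. Every smaller `|r'|` is then reached by the damping channel
`diag(1, t)`, `diag(0, √(1 - t²))`.
-/

open scoped ComplexConjugate

lemma Incoherent.eq_zero_or_eq_zero {K : Matrix (Fin 2) (Fin 2) ℂ} (hK : Incoherent K)
    (j : Fin 2) : K 0 j = 0 ∨ K 1 j = 0 := by
  by_contra! h
  exact absurd (hK j 0 1 h.1 h.2) (by decide)

lemma Incoherent.mul {K L : Matrix (Fin 2) (Fin 2) ℂ} (hK : Incoherent K)
    (hL : Incoherent L) : Incoherent (K * L) := by
  intro j i i' h h'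
  rw [mul_apply, Fin.sum_univ_two] at h h'
  rcases hL.eq_zero_or_eq_zero j with h0 | h0 <;>
    simp only [h0, mul_zero, zero_add, add_zero] at h h'
  · exact hK 1 i i' (left_ne_zero_of_mul h) (left_ne_zero_of_mul h')
  · exact hK 0 i i' (left_ne_zero_of_mul h) (left_ne_zero_of_mul h')

lemma incoherent_diag (a b : ℂ) : Incoherent !![a, 0; 0, b] := by
  intro j i i' h h'
  fin_cases j <;> fin_cases i <;> fin_cases i' <;> simp_all

lemma incoherent_antidiag (a b : ℂ) : Incoherent !![0, b; a, 0] := by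
  intro j i i' h h'
  fin_cases j <;> fin_cases i <;> fin_cases i' <;> simp_all

def IOReachable (ρ σ : Matrix (Fin 2) (Fin 2) ℂ) : Prop :=
  ∃ (ι : Type) (_ : Fintype ι) (K : ι → Matrix (Fin 2) (Fin 2) ℂ),
    (∀ i, Incoherent (K i)) ∧ ∑ i, (K i)ᴴ * K i = 1 ∧ ∑ i, K i * ρ * (K i)ᴴ = σ

lemma ioReachable_iff_exists_fin {ρ σ : Matrix (Fin 2) (Fin 2) ℂ} :
    IOReachable ρ σ ↔ ∃ (n : ℕ) (K : Fin n → Matrix (Fin 2) (Fin 2) ℂ),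
      (∀ i, Incoherent (K i)) ∧ (∑ i, (K i)ᴴ * K i = 1) ∧ ∑ i, K i * ρ * (K i)ᴴ = σ := by
  constructor
  · rintro ⟨ι, _, K, hinc, hK, hσ⟩
    set e := Fintype.equivFin ι
    exact ⟨Fintype.card ι, fun i => K (e.symm i), fun i => hinc _,
      (e.symm.sum_comp fun i => (K i)ᴴ * K i).trans hK,
      (e.symm.sum_comp fun i => K i * ρ * (K i)ᴴ).trans hσ⟩
  · rintro ⟨n, K, h⟩
    exact ⟨Fin n, inferInstance, K, h⟩

lemma IOReachable.trans {ρ σ τ : Matrix (Fin 2) (Fin 2) ℂ} (h₁ : IOReachable ρ σ)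
    (h₂ : IOReachable σ τ) : IOReachable ρ τ := by
  obtain ⟨ι, _, K, hKinc, hK, rfl⟩ := h₁
  obtain ⟨κ, _, L, hLinc, hL, rfl⟩ := h₂
  refine ⟨ι × κ, inferInstance, fun x => L x.2 * K x.1, fun x => (hLinc _).mul (hKinc _), ?_, ?_⟩
  · calc ∑ x : ι × κ, (L x.2 * K x.1)ᴴ * (L x.2 * K x.1)
        = ∑ i, (K i)ᴴ * (∑ j, (L j)ᴴ * L j) * K i := by
          simp only [Fintype.sum_prod_type, Finset.mul_sum, Finset.sum_mul, conjTranspose_mul,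
            Matrix.mul_assoc]
      _ = 1 := by simpa [hL] using hK
  · simp only [Fintype.sum_prod_type, Finset.mul_sum, Finset.sum_mul, conjTranspose_mul,
      Matrix.mul_assoc]
    exact Finset.sum_comm

lemma ioReachable_pair {K₁ K₂ : Matrix (Fin 2) (Fin 2) ℂ} (h₁ : Incoherent K₁)
    (h₂ : Incoherent K₂) (hK : K₁ᴴ * K₁ + K₂ᴴ * K₂ = 1) (ρ : Matrix (Fin 2) (Fin 2) ℂ) :
    IOReachable ρ (K₁ * ρ * K₁ᴴ + K₂ * ρ * K₂ᴴ) :=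
  ⟨Fin 2, inferInstance, ![K₁, K₂], Fin.forall_fin_two.2 ⟨h₁, h₂⟩,
    by simpa [Fin.sum_univ_two] using hK, by simp [Fin.sum_univ_two]⟩

noncomputable def qubitForm (z r : ℝ) (x y : ℂ) : ℝ :=
  Complex.normSq x * ((1 + z) / 2) + Complex.normSq y * ((1 - z) / 2) + r * (x * conj y).re

lemma mul_qubit_mul_conjTranspose_apply_self (K : Matrix (Fin 2) (Fin 2) ℂ) (z r : ℝ)
    (i : Fin 2) : (K * qubit z r * Kᴴ) i i = qubitForm z r (K i 0) (K i 1) := by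
  simp [qubitForm, mul_apply, Fin.sum_univ_two, qubit, Complex.ext_iff, Complex.normSq_apply]
  constructor <;> ring

lemma qubitForm_nonneg {z r : ℝ} (hzr : z ^ 2 + r ^ 2 ≤ 1) (x y : ℂ) : 0 ≤ qubitForm z r x y := by
  have hre : (x * conj y).re ^ 2 ≤ Complex.normSq x * Complex.normSq y := by
    rw [sq, ← Complex.normSq_conj y, ← Complex.normSq_mul]
    exact Complex.re_sq_le_normSq _
  have hz : z ^ 2 ≤ 1 := by nlinarith
  have hp : 0 ≤ Complex.normSq x * ((1 + z) / 2) :=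
    mul_nonneg (Complex.normSq_nonneg x) (by nlinarith)
  have hq : 0 ≤ Complex.normSq y * ((1 - z) / 2) :=
    mul_nonneg (Complex.normSq_nonneg y) (by nlinarith)
  have hsq : (r * (x * conj y).re) ^ 2
      ≤ (Complex.normSq x * ((1 + z) / 2) + Complex.normSq y * ((1 - z) / 2)) ^ 2 := by
    nlinarith [mul_le_mul hre (show r ^ 2 ≤ 1 - z ^ 2 by linarith) (sq_nonneg r)
      (mul_nonneg (Complex.normSq_nonneg x) (Complex.normSq_nonneg y)),
      sq_nonneg (Complex.normSq x * ((1 + z) / 2) - Complex.normSq y * ((1 - z) / 2))]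
  unfold qubitForm
  linarith [(abs_le_of_sq_le_sq' hsq (add_nonneg hp hq)).1]

def cohAmp (K : Matrix (Fin 2) (Fin 2) ℂ) : ℂ := K 0 0 * conj (K 1 1) + K 0 1 * conj (K 1 0)

lemma Incoherent.mul_qubit_mul_conjTranspose_apply_zero_one {K : Matrix (Fin 2) (Fin 2) ℂ}
    (hK : Incoherent K) (z r : ℝ) : (K * qubit z r * Kᴴ) 0 1 = (r / 2 : ℂ) * cohAmp K := by
  simp only [cohAmp, mul_apply, conjTranspose_apply, Fin.sum_univ_two, qubit]
  rcases hK.eq_zero_or_eq_zero 0 with h₀ | h₀ <;> rcases hK.eq_zero_or_eq_zero 1 with h₁ | h₁ <;>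
    simp [h₀, h₁] <;> ring

lemma Incoherent.norm_cohAmp_sq_mul {K : Matrix (Fin 2) (Fin 2) ℂ} (hK : Incoherent K) (z r : ℝ) :
    ‖cohAmp K‖ ^ 2 * ((1 + z) / 2 * ((1 - z) / 2))
      = qubitForm z r (K 0 0) (K 0 1) * qubitForm z r (K 1 0) (K 1 1) := by
  simp only [cohAmp, qubitForm, Complex.sq_norm]
  rcases hK.eq_zero_or_eq_zero 0 with h₀ | h₀ <;> rcases hK.eq_zero_or_eq_zero 1 with h₁ | h₁ <;>
    simp [h₀, h₁, Complex.normSq_mul] <;> ring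

lemma norm_cohAmp_sq_le (K : Matrix (Fin 2) (Fin 2) ℂ) :
    ‖cohAmp K‖ ^ 2 ≤ (Complex.normSq (K 0 0) + Complex.normSq (K 1 0))
      * (Complex.normSq (K 0 1) + Complex.normSq (K 1 1)) := by
  have htri : ‖cohAmp K‖ ≤ ‖K 0 0‖ * ‖K 1 1‖ + ‖K 0 1‖ * ‖K 1 0‖ := by
    simpa [cohAmp] using norm_add_le (K 0 0 * conj (K 1 1)) (K 0 1 * conj (K 1 0))
  simp only [← Complex.sq_norm]
  nlinarith [pow_le_pow_left₀ (norm_nonneg _) htri 2,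
    sq_nonneg (‖K 0 0‖ * ‖K 0 1‖ - ‖K 1 0‖ * ‖K 1 1‖)]

lemma conjTranspose_mul_self_apply_self (K : Matrix (Fin 2) (Fin 2) ℂ) (j : Fin 2) :
    (Kᴴ * K) j j = ((Complex.normSq (K 0 j) + Complex.normSq (K 1 j) : ℝ) : ℂ) := by
  simp [mul_apply, Fin.sum_univ_two, Complex.normSq_eq_conj_mul_self]

section Necessity

variable {ι : Type} [Fintype ι] {K : ι → Matrix (Fin 2) (Fin 2) ℂ}

lemma sum_norm_cohAmp_le_one (hK : ∑ i, (K i)ᴴ * K i = 1) : ∑ i, ‖cohAmp (K i)‖ ≤ 1 := by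
  have hcol (j : Fin 2) : ∑ i, (Complex.normSq (K i 0 j) + Complex.normSq (K i 1 j)) = 1 := by
    have := congrFun₂ hK j j
    simp only [Matrix.sum_apply, conjTranspose_mul_self_apply_self, one_apply_eq] at this
    exact_mod_cast this
  have hsq : (∑ i, ‖cohAmp (K i)‖) ^ 2 ≤ 1 := by
    simpa [hcol] using Finset.sum_sq_le_sum_mul_sum_of_sq_le_mul Finset.univ
      (fun i _ => add_nonneg (Complex.normSq_nonneg _) (Complex.normSq_nonneg _))
      (fun i _ => add_nonneg (Complex.normSq_nonneg _) (Complex.normSq_nonneg _))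
      (fun i _ => norm_cohAmp_sq_le (K i))
  exact (sq_le_one_iff₀ (Finset.sum_nonneg fun i _ => norm_nonneg _)).1 hsq

variable {z r z' r' : ℝ}

lemma sum_norm_cohAmp_sq_mul_le (hzr : z ^ 2 + r ^ 2 ≤ 1) (hinc : ∀ i, Incoherent (K i))
    (hout : ∑ i, K i * qubit z r * (K i)ᴴ = qubit z' r') :
    (∑ i, ‖cohAmp (K i)‖) ^ 2 * ((1 + z) / 2 * ((1 - z) / 2))
      ≤ (1 + z') / 2 * ((1 - z') / 2) := by
  have hdiag (j : Fin 2) :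
      ∑ i, qubitForm z r (K i j 0) (K i j 1) = (qubit z' r' j j).re := by
    have := congrArg Complex.re (congrFun₂ hout j j)
    simpa [Matrix.sum_apply, mul_qubit_mul_conjTranspose_apply_self] using this
  have hpq : 0 ≤ (1 + z) / 2 * ((1 - z) / 2) := by nlinarith
  have := Finset.sum_sq_le_sum_mul_sum_of_sq_le_mul Finset.univ
    (r := fun i => ‖cohAmp (K i)‖ * √((1 + z) / 2 * ((1 - z) / 2)))
    (fun i _ => qubitForm_nonneg hzr _ _) (fun i _ => qubitForm_nonneg hzr _ _)
    (fun i _ => by rw [mul_pow, Real.sq_sqrt hpq, (hinc i).norm_cohAmp_sq_mul])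
  rw [← Finset.sum_mul, mul_pow, Real.sq_sqrt hpq, hdiag, hdiag] at this
  simpa [qubit, div_eq_inv_mul] using this

lemma mul_sum_cohAmp (hinc : ∀ i, Incoherent (K i))
    (hout : ∑ i, K i * qubit z r * (K i)ᴴ = qubit z' r') :
    (r : ℂ) * ∑ i, cohAmp (K i) = r' := by
  have := congrFun₂ hout 0 1
  simp only [Matrix.sum_apply, (hinc _).mul_qubit_mul_conjTranspose_apply_zero_one,
    ← Finset.mul_sum] at this
  simp [qubit] at this
  linear_combination 2 * this

lemma IOReachable.qubit_coherence_bounds (hzr : z ^ 2 + r ^ 2 ≤ 1)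
    (h : IOReachable (qubit z r) (qubit z' r')) :
    r' ^ 2 * (1 - z ^ 2) ≤ r ^ 2 * (1 - z' ^ 2) ∧ |r'| ≤ |r| := by
  obtain ⟨ι, _, K, hinc, hK, hout⟩ := h
  set U := ∑ i, ‖cohAmp (K i)‖
  have hU : U ≤ 1 := sum_norm_cohAmp_le_one hK
  have hr' : |r'| ≤ |r| * U := by
    have := congrArg norm (mul_sum_cohAmp hinc hout)
    simp only [norm_mul, Complex.norm_real, Real.norm_eq_abs] at this
    rw [← this]
    exact mul_le_mul_of_nonneg_left (norm_sum_le _ _) (abs_nonneg r)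
  have hz : 0 ≤ 1 - z ^ 2 := by nlinarith
  constructor
  · have hr'sq : r' ^ 2 ≤ (|r| * U) ^ 2 := by
      rw [← sq_abs r']
      exact pow_le_pow_left₀ (abs_nonneg _) hr' 2
    calc r' ^ 2 * (1 - z ^ 2) ≤ (|r| * U) ^ 2 * (1 - z ^ 2) :=
          mul_le_mul_of_nonneg_right hr'sq hz
      _ = 4 * r ^ 2 * (U ^ 2 * ((1 + z) / 2 * ((1 - z) / 2))) := by rw [mul_pow, sq_abs]; ring
      _ ≤ 4 * r ^ 2 * ((1 + z') / 2 * ((1 - z') / 2)) :=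
          mul_le_mul_of_nonneg_left (sum_norm_cohAmp_sq_mul_le hzr hinc hout) (by positivity)
      _ = r ^ 2 * (1 - z' ^ 2) := by ring
  · exact hr'.trans (mul_le_of_le_one_right (abs_nonneg r) hU)

end Necessity

lemma ioReachable_qubit_diag_antidiag (z r a b c d : ℝ) (hac : a ^ 2 + c ^ 2 = 1)
    (hbd : b ^ 2 + d ^ 2 = 1) :
    IOReachable (qubit z r)
      (qubit (a ^ 2 * (1 + z) + d ^ 2 * (1 - z) - 1) ((a * b + c * d) * r)) := by
  have hacC : (a : ℂ) ^ 2 + (c : ℂ) ^ 2 = 1 := by exact_mod_cast hac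
  have hbdC : (b : ℂ) ^ 2 + (d : ℂ) ^ 2 = 1 := by exact_mod_cast hbd
  convert ioReachable_pair (incoherent_diag a b) (incoherent_antidiag c d) ?_ (qubit z r) using 1
  · ext i j
    fin_cases i <;> fin_cases j <;> simp [qubit, vecMul, dotProduct, Fin.sum_univ_two] <;>
      first | ring1 | linear_combination -(1 + (z : ℂ)) / 2 * hacC - (1 - (z : ℂ)) / 2 * hbdC
  · ext i j
    fin_cases i <;> fin_cases j <;> simp [mul_apply, Fin.sum_univ_two] <;>
      first | linear_combination hacC | linear_combination hbdC

lemma ioReachable_qubit_mul_coherence (z r t : ℝ) (ht : t ^ 2 ≤ 1) :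
    IOReachable (qubit z r) (qubit z (t * r)) := by
  have hs : (Real.sqrt (1 - t ^ 2) : ℂ) ^ 2 = 1 - (t : ℂ) ^ 2 := by
    exact_mod_cast Real.sq_sqrt (sub_nonneg.2 ht)
  convert ioReachable_pair (incoherent_diag 1 t) (incoherent_diag 0 (Real.sqrt (1 - t ^ 2))) ?_
    (qubit z r) using 1
  · ext i j
    fin_cases i <;> fin_cases j <;> simp [qubit, vecMul, dotProduct, Fin.sum_univ_two] <;>
      first | ring1 | linear_combination -(1 - (z : ℂ)) / 2 * hs
  · ext i j
    fin_cases i <;> fin_cases j <;> simp [mul_apply, Fin.sum_univ_two]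
    linear_combination hs

lemma ioReachable_qubit_neg (z r : ℝ) : IOReachable (qubit z r) (qubit (-z) r) := by
  simpa using ioReachable_qubit_diag_antidiag z r 0 0 1 1 (by norm_num) (by norm_num)

lemma IOReachable.qubit_of_abs_le {ρ : Matrix (Fin 2) (Fin 2) ℂ} {z r₀ r : ℝ}
    (h : IOReachable ρ (qubit z r₀)) (hr : |r| ≤ |r₀|) : IOReachable ρ (qubit z r) := by
  rcases eq_or_ne r₀ 0 with rfl | hr₀
  · rwa [show r = 0 by simpa using hr]
  · have ht : (r / r₀) ^ 2 ≤ 1 := by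
      rw [div_pow, div_le_one (by positivity)]
      exact sq_le_sq.2 hr
    simpa [div_mul_cancel₀ r hr₀] using h.trans (ioReachable_qubit_mul_coherence z r₀ _ ht)

lemma ioReachable_qubit_of_abs_le_abs {z z' : ℝ} (hz : |z'| ≤ |z|) (r : ℝ) :
    IOReachable (qubit z r) (qubit z' r) := by
  -- the Kraus pair is `√w • 1`, `√(1 - w) • σₓ`
  set w := (1 + z' / z) / 2 with hw_def
  have hw : 0 ≤ w ∧ 0 ≤ 1 - w := by
    have := abs_le.1 (abs_div z' z ▸ div_le_one_of_le₀ hz (abs_nonneg z))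
    constructor <;> linarith
  have hz' : (2 * w - 1) * z = z' := by
    rcases eq_or_ne z 0 with rfl | hz0
    · simpa using (abs_nonpos_iff.1 (by simpa using hz)).symm
    · rw [hw_def]
      field_simp
      ring
  convert ioReachable_qubit_diag_antidiag z r √w √w √(1 - w) √(1 - w) (by simp [hw.1, hw.2])
    (by simp [hw.1, hw.2]) using 2
  · rw [Real.sq_sqrt hw.1, Real.sq_sqrt hw.2, ← hz']
    ring
  · rw [Real.mul_self_sqrt hw.1, Real.mul_self_sqrt hw.2]
    ring

lemma exists_ioReachable_qubit_of_abs_lt {z z' : ℝ} (hz : |z| < z') (hz' : z' ≤ 1) (r : ℝ) :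
    ∃ m, m ^ 2 * (1 - z ^ 2) = 1 - z' ^ 2 ∧ IOReachable (qubit z r) (qubit z' (m * r)) := by
  obtain ⟨hz₁, hz₂⟩ := abs_lt.1 hz
  have hzpos : 0 < z' := (abs_nonneg z).trans_lt hz
  have hp : 1 + z ≠ 0 := by linarith
  have hq : 1 - z ≠ 0 := by linarith
  obtain ⟨A, hA, hA0⟩ : ∃ A, A ^ 2 = 1 + z ∧ 0 < A :=
    ⟨√(1 + z), Real.sq_sqrt (by linarith), Real.sqrt_pos.2 (by linarith)⟩
  obtain ⟨B, hB, hB0⟩ : ∃ B, B ^ 2 = 1 - z ∧ 0 < B :=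
    ⟨√(1 - z), Real.sq_sqrt (by linarith), Real.sqrt_pos.2 (by linarith)⟩
  obtain ⟨A', hA'⟩ : ∃ A', A' ^ 2 = 1 + z' := ⟨√(1 + z'), Real.sq_sqrt (by linarith)⟩
  obtain ⟨B', hB'⟩ : ∃ B', B' ^ 2 = 1 - z' := ⟨√(1 - z'), Real.sq_sqrt (by linarith)⟩
  obtain ⟨u, hu⟩ : ∃ u, u ^ 2 = (z' + z) / (2 * z') :=
    ⟨√((z' + z) / (2 * z')), Real.sq_sqrt (div_nonneg (by linarith) (by positivity))⟩
  obtain ⟨v, hv⟩ : ∃ v, v ^ 2 = (z' - z) / (2 * z') :=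
    ⟨√((z' - z) / (2 * z')), Real.sq_sqrt (div_nonneg (by linarith) (by positivity))⟩
  -- `u² + v² = 1` and `z' (u² - v²) = z` are exactly what the Kraus entries below need.
  have huv : u ^ 2 + v ^ 2 = 1 := by
    rw [hu, hv]
    field_simp
    ring
  refine ⟨A' * B' / (A * B), ?_, ?_⟩
  · rw [div_pow, mul_pow, mul_pow, hA, hB, hA', hB']
    field_simp
    ring
  convert ioReachable_qubit_diag_antidiag z r (u * A' / A) (u * B' / B) (v * B' / A) (v * A' / B)
    ?_ ?_ using 2
  · rw [div_pow, div_pow, mul_pow, mul_pow, hA, hB, hA', hu, hv]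
    field_simp
    ring
  · field_simp
    linear_combination (-(A' * B') * r) * huv
  · rw [div_pow, div_pow, mul_pow, mul_pow, hA, hA', hB', hu, hv]
    field_simp
    ring
  · rw [div_pow, div_pow, mul_pow, mul_pow, hB, hA', hB', hu, hv]
    field_simp
    ring

lemma ioReachable_qubit_of_coherence_bounds {z r z' r' : ℝ} (hz' : |z'| ≤ 1)
    (hcoh : r' ^ 2 * (1 - z ^ 2) ≤ r ^ 2 * (1 - z' ^ 2)) (hr : |r'| ≤ |r|) :
    IOReachable (qubit z r) (qubit z' r') := by
  rcases le_or_gt |z'| |z| with hz | hz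
  · exact (ioReachable_qubit_of_abs_le_abs hz r).qubit_of_abs_le hr
  obtain ⟨m, hm, hreach⟩ := exists_ioReachable_qubit_of_abs_lt hz hz' r
  have hpos : 0 < 1 - z ^ 2 := sub_pos.2 ((sq_lt_one_iff_abs_lt_one z).2 (hz.trans_le hz'))
  have hr' : |r'| ≤ |m * r| := by
    rw [← sq_le_sq]
    refine le_of_mul_le_mul_right ?_ hpos
    calc r' ^ 2 * (1 - z ^ 2) ≤ r ^ 2 * (1 - z' ^ 2) := hcoh
      _ = (m * r) ^ 2 * (1 - z ^ 2) := by rw [← sq_abs z', ← hm]; ring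
  have habs : IOReachable (qubit z r) (qubit |z'| r') := hreach.qubit_of_abs_le hr'
  rcases abs_choice z' with h | h
  · rwa [h] at habs
  · simpa [h] using habs.trans (ioReachable_qubit_neg _ r')

/-- Theorem 2: `ρ(z',r')` is reachable from `ρ(z,r)` by an incoherent operation iff
`r'²(1-z²) ≤ r²(1-z'²)` and `|r'| ≤ |r|`. -/
theorem io_transformation_region (z r z' r' : ℝ)
    (hzr : z ^ 2 + r ^ 2 ≤ 1) (hzr' : z' ^ 2 + r' ^ 2 ≤ 1) :
    (∃ (n : ℕ) (K : Fin n → Matrix (Fin 2) (Fin 2) ℂ),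
      (∀ i, Incoherent (K i)) ∧ (∑ i, (K i)ᴴ * K i = 1) ∧
      ∑ i, K i * qubit z r * (K i)ᴴ = qubit z' r') ↔
    r' ^ 2 * (1 - z ^ 2) ≤ r ^ 2 * (1 - z' ^ 2) ∧ |r'| ≤ |r| := by
  rw [← ioReachable_iff_exists_fin]
  have hz' : |z'| ≤ 1 := (sq_le_one_iff_abs_le_one z').1 (by nlinarith)
  exact ⟨IOReachable.qubit_coherence_bounds hzr,
    fun ⟨hcoh, hr⟩ => ioReachable_qubit_of_coherence_bounds hz' hcoh hr⟩
end

section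
/- Let r, r' be real numbers in [0,1], and let ψ = ρ(√(1−r²), r) and φ = ρ(√(1−r'²), r') be the corresponding pure qubit states. There exists a finite family {K_n} of incoherent 2×2 complex matrices with ∑_n K_n† K_n = I and ∑_n K_n ψ K_n† = φ if and only if r' ≤ r, i.e., if and only if C_{l₁}(ψ) ≥ C_{l₁}(φ). -/
open Matrix

/-!
For an incoherent `K` the products `K₀ⱼ K̄₁ⱼ` vanish, so
`(K ρ K†)₀₁ = K₀₀ K̄₁₁ ρ₀₁ + K₀₁ K̄₁₀ ρ₁₀`, whose modulus is at most `|ρ₀₁| ‖K‖²_F / 2` by AM-GM.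
The squared Frobenius norms of a Kraus family add up to the dimension `2`, so an incoherent
operation cannot increase `|ρ₀₁|`.

Conversely, write the pure states as `ψ = (a, b)` and `φ = (a', b')`. When `(a², b²)` is
majorized by `(a'², b'²)`, the pair `diag(s a'/a, s b'/b)`, `antidiag(t a'/b, t b'/a)` with
`s² = (a² - b'²)/(a'² - b'²)` and `t² = 1 - s²` maps `ψ` to `s φ` and to `t φ` and is a Kraus
family; for the states of the theorem this majorization is exactly `r' ≤ r`.
-/

namespace Incoherent

variable {K : Matrix (Fin 2) (Fin 2) ℂ}

lemma mul_star_eq_zero (hK : Incoherent K) (j : Fin 2) : K 0 j * star (K 1 j) = 0 := by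
  by_contra h
  obtain ⟨h0, h1⟩ := mul_ne_zero_iff.mp h
  exact zero_ne_one (hK j 0 1 h0 (star_ne_zero.mp h1))

lemma mul_mul_conjTranspose_apply_zero_one (hK : Incoherent K)
    (ρ : Matrix (Fin 2) (Fin 2) ℂ) :
    (K * ρ * Kᴴ) 0 1 = K 0 0 * star (K 1 1) * ρ 0 1 + K 0 1 * star (K 1 0) * ρ 1 0 := by
  have h0 := hK.mul_star_eq_zero 0
  have h1 := hK.mul_star_eq_zero 1
  simp only [mul_apply, Fin.sum_univ_two, conjTranspose_apply]
  linear_combination ρ 0 0 * h0 + ρ 1 1 * h1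

lemma norm_mul_mul_conjTranspose_apply_zero_one_le (hK : Incoherent K)
    {ρ : Matrix (Fin 2) (Fin 2) ℂ} (hρ : ρ.IsHermitian) :
    ‖(K * ρ * Kᴴ) 0 1‖ ≤ ‖ρ 0 1‖ * (∑ i, ∑ j, ‖K i j‖ ^ 2) / 2 := by
  have hρ10 : ‖ρ 1 0‖ = ‖ρ 0 1‖ := by rw [← hρ.apply 0 1, norm_star]
  rw [hK.mul_mul_conjTranspose_apply_zero_one]
  calc _ ≤ ‖K 0 0‖ * ‖K 1 1‖ * ‖ρ 0 1‖ + ‖K 0 1‖ * ‖K 1 0‖ * ‖ρ 0 1‖ := by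
        refine (norm_add_le _ _).trans_eq ?_
        simp only [norm_mul, norm_star, hρ10]
    _ ≤ _ := by
        simp only [Fin.sum_univ_two]
        nlinarith [sq_nonneg (‖K 0 0‖ - ‖K 1 1‖), sq_nonneg (‖K 0 1‖ - ‖K 1 0‖),
          norm_nonneg (ρ 0 1)]

lemma one : Incoherent 1 := by
  intro j i i' hi hi'
  rw [(not_imp_comm.mp one_apply_ne hi), (not_imp_comm.mp one_apply_ne hi')]

end Incoherent

lemma incoherent_diagonal (x y : ℂ) : Incoherent !![x, 0; 0, y] := by
  intro j i i' h h'
  fin_cases j <;> fin_cases i <;> fin_cases i' <;> simp_all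

lemma incoherent_antidiagonal (x y : ℂ) : Incoherent !![0, x; y, 0] := by
  intro j i i' h h'
  fin_cases j <;> fin_cases i <;> fin_cases i' <;> simp_all

section KrausFamily

variable {ι l m : Type*} [Fintype ι] [Fintype m]

lemma trace_conjTranspose_mul_self_eq_sum_norm_sq [Fintype l] (A : Matrix l m ℂ) :
    (Aᴴ * A).trace = ((∑ i, ∑ j, ‖A i j‖ ^ 2 : ℝ) : ℂ) := by
  rw [trace, Finset.sum_comm]
  push_cast
  simp [mul_apply, Complex.conj_mul']

lemma sum_sum_sum_norm_sq_eq_card [Fintype l] [DecidableEq m] {K : ι → Matrix l m ℂ}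
    (hK : ∑ n, (K n)ᴴ * K n = 1) :
    ∑ n, ∑ i, ∑ j, ‖K n i j‖ ^ 2 = Fintype.card m := by
  have h := congrArg trace hK
  rw [trace_sum, trace_one] at h
  simp only [trace_conjTranspose_mul_self_eq_sum_norm_sq] at h
  exact_mod_cast h

lemma mul_vecMulVec_star_mul_conjTranspose (K : Matrix l m ℂ) (ψ : m → ℂ) :
    K * vecMulVec ψ (star ψ) * Kᴴ = vecMulVec (K *ᵥ ψ) (star (K *ᵥ ψ)) := by
  rw [mul_vecMulVec, vecMulVec_mul, vecMul_conjTranspose, star_star]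

lemma sum_mul_vecMulVec_star_mul_conjTranspose {K : ι → Matrix l m ℂ} {ψ : m → ℂ}
    {φ : l → ℂ} {c : ι → ℂ} (hKψ : ∀ i, K i *ᵥ ψ = c i • φ) (hc : ∑ i, ‖c i‖ ^ 2 = 1) :
    ∑ i, K i * vecMulVec ψ (star ψ) * (K i)ᴴ = vecMulVec φ (star φ) := by
  simp_rw [mul_vecMulVec_star_mul_conjTranspose, hKψ, star_smul, smul_vecMulVec,
    vecMulVec_smul, smul_smul, ← Finset.sum_smul]
  have hc' : ∑ i, c i * star (c i) = 1 := by
    simp_rw [Complex.star_def, Complex.mul_conj']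
    exact_mod_cast hc
  rw [hc', one_smul]

end KrausFamily

theorem norm_sum_mul_mul_conjTranspose_apply_zero_one_le {ι : Type*} [Fintype ι]
    {K : ι → Matrix (Fin 2) (Fin 2) ℂ} (hK : ∀ i, Incoherent (K i))
    (hKraus : ∑ i, (K i)ᴴ * K i = 1) {ρ : Matrix (Fin 2) (Fin 2) ℂ} (hρ : ρ.IsHermitian) :
    ‖(∑ i, K i * ρ * (K i)ᴴ) 0 1‖ ≤ ‖ρ 0 1‖ := by
  calc ‖(∑ i, K i * ρ * (K i)ᴴ) 0 1‖ ≤ ∑ i, ‖(K i * ρ * (K i)ᴴ) 0 1‖ := by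
        rw [Matrix.sum_apply]
        exact norm_sum_le _ _
    _ ≤ ∑ i, ‖ρ 0 1‖ * (∑ a, ∑ b, ‖K i a b‖ ^ 2) / 2 :=
        Finset.sum_le_sum fun i _ => (hK i).norm_mul_mul_conjTranspose_apply_zero_one_le hρ
    _ = ‖ρ 0 1‖ := by
        rw [← Finset.sum_div, ← Finset.mul_sum, sum_sum_sum_norm_sq_eq_card hKraus]
        simp

lemma qubit_isHermitian (z r : ℝ) : (qubit z r).IsHermitian := by
  refine IsHermitian.ext fun i j => ?_
  fin_cases i <;> fin_cases j <;> simp [qubit, Complex.conj_ofReal]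

lemma qubit_apply_zero_one (z r : ℝ) : qubit z r 0 1 = ((r / 2 : ℝ) : ℂ) := by
  simp only [qubit, Matrix.smul_apply, of_apply, cons_val', cons_val_one, cons_val_fin_one,
    cons_val_zero, smul_eq_mul, Complex.ofReal_div, Complex.ofReal_ofNat]
  ring

lemma qubit_eq_vecMulVec {a b : ℝ} (h : a ^ 2 + b ^ 2 = 1) :
    qubit (a ^ 2 - b ^ 2) (2 * a * b) = vecMulVec ![(a : ℂ), b] (star ![(a : ℂ), b]) := by
  have hC : (a : ℂ) ^ 2 + (b : ℂ) ^ 2 = 1 := by exact_mod_cast h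
  ext i j
  fin_cases i <;> fin_cases j <;>
    simp only [Fin.zero_eta, Fin.mk_one, Fin.isValue, qubit, Matrix.smul_apply, of_apply,
      cons_val', cons_val_zero, cons_val_one, cons_val_fin_one, smul_eq_mul, vecMulVec,
      Pi.star_apply, RCLike.star_def, Complex.conj_ofReal, Complex.ofReal_sub,
      Complex.ofReal_pow, Complex.ofReal_mul, Complex.ofReal_ofNat] <;>
    [linear_combination (-1 / 2 : ℂ) * hC; ring; ring; linear_combination (-1 / 2 : ℂ) * hC]

lemma diagonal_antidiagonal_isKraus {α β γ δ : ℝ} (h₁ : α ^ 2 + δ ^ 2 = 1)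
    (h₂ : β ^ 2 + γ ^ 2 = 1) :
    (!![(α : ℂ), 0; 0, (β : ℂ)])ᴴ * !![(α : ℂ), 0; 0, (β : ℂ)]
      + (!![0, (γ : ℂ); (δ : ℂ), 0])ᴴ * !![0, (γ : ℂ); (δ : ℂ), 0] = 1 := by
  have h₁' : (α : ℂ) ^ 2 + (δ : ℂ) ^ 2 = 1 := by exact_mod_cast h₁
  have h₂' : (β : ℂ) ^ 2 + (γ : ℂ) ^ 2 = 1 := by exact_mod_cast h₂
  ext i j
  fin_cases i <;> fin_cases j <;>
    simp only [Fin.zero_eta, Fin.mk_one, Fin.isValue, Matrix.add_apply, mul_apply,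
      conjTranspose_apply, of_apply, cons_val', cons_val_zero, cons_val_one, cons_val_fin_one,
      RCLike.star_def, Fin.sum_univ_two, Complex.conj_ofReal, map_zero, mul_zero, zero_mul,
      add_zero, zero_add, one_apply_eq, one_apply_ne, ne_eq, zero_ne_one, one_ne_zero,
      not_false_eq_true] <;>
    [linear_combination h₁'; linear_combination h₂']

theorem exists_incoherent_kraus_of_sq_le {a b a' b' : ℝ} (ha : a ≠ 0) (hb : b ≠ 0)
    (hab : a ^ 2 + b ^ 2 = 1) (ha'b' : a' ^ 2 + b' ^ 2 = 1)
    (hb'a : b' ^ 2 ≤ a ^ 2) (haa' : a ^ 2 ≤ a' ^ 2) (hb'a' : b' ^ 2 < a' ^ 2) :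
    ∃ (n : ℕ) (K : Fin n → Matrix (Fin 2) (Fin 2) ℂ), (∀ i, Incoherent (K i)) ∧
      (∑ i, (K i)ᴴ * K i = 1) ∧
      ∑ i, K i * vecMulVec ![(a : ℂ), b] (star ![(a : ℂ), b]) * (K i)ᴴ
        = vecMulVec ![(a' : ℂ), b'] (star ![(a' : ℂ), b']) := by
  set p := (a ^ 2 - b' ^ 2) / (a' ^ 2 - b' ^ 2)
  have hgap : 0 < a' ^ 2 - b' ^ 2 := sub_pos.2 hb'a'
  have hp : p * (a' ^ 2 - b' ^ 2) = a ^ 2 - b' ^ 2 := div_mul_cancel₀ _ hgap.ne'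
  have hs : √p ^ 2 = p := Real.sq_sqrt (div_nonneg (sub_nonneg.2 hb'a) hgap.le)
  have ht : √(1 - p) ^ 2 = 1 - p :=
    Real.sq_sqrt (sub_nonneg.2 ((div_le_one hgap).2 (by linarith)))
  set s := √p
  set t := √(1 - p)
  refine ⟨2, ![!![((s * a' / a : ℝ) : ℂ), 0; 0, ((s * b' / b : ℝ) : ℂ)],
    !![0, ((t * a' / b : ℝ) : ℂ); ((t * b' / a : ℝ) : ℂ), 0]], ?_, ?_, ?_⟩
  · intro i
    fin_cases i
    exacts [incoherent_diagonal _ _, incoherent_antidiagonal _ _]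
  · rw [Fin.sum_univ_two]
    apply diagonal_antidiagonal_isKraus
    · field_simp
      linear_combination a' ^ 2 * hs + b' ^ 2 * ht + hp
    · field_simp
      linear_combination b' ^ 2 * hs + a' ^ 2 * ht - hp + ha'b' - hab
  · refine sum_mul_vecMulVec_star_mul_conjTranspose (c := ![(s : ℂ), t]) ?_ ?_
    · have ha' : (a : ℂ) ≠ 0 := by exact_mod_cast ha
      have hb' : (b : ℂ) ≠ 0 := by exact_mod_cast hb
      intro i
      fin_cases i <;> ext j <;> fin_cases j <;>
        simp only [Fin.zero_eta, Fin.mk_one, Fin.isValue, mulVec, dotProduct, Fin.sum_univ_two,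
          of_apply, cons_val', cons_val_zero, cons_val_one, cons_val_fin_one, zero_mul, add_zero,
          zero_add, Pi.smul_apply, smul_eq_mul, Complex.ofReal_div, Complex.ofReal_mul] <;>
        field_simp
    · simp only [Fin.sum_univ_two, cons_val_zero, cons_val_one, cons_val_fin_one,
        Complex.norm_real, Real.norm_eq_abs, sq_abs]
      linear_combination hs + ht

lemma exists_amplitudes_of_mem_Icc {r : ℝ} (hr0 : 0 ≤ r) (hr1 : r ≤ 1) :
    ∃ a b : ℝ, a ^ 2 + b ^ 2 = 1 ∧ a ^ 2 - b ^ 2 = √(1 - r ^ 2) ∧ 2 * a * b = r := by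
  set z := √(1 - r ^ 2)
  have hz : z ^ 2 = 1 - r ^ 2 := Real.sq_sqrt (by nlinarith)
  have hz0 : 0 ≤ z := Real.sqrt_nonneg _
  have hz1 : z ≤ 1 := Real.sqrt_le_one.mpr (by nlinarith)
  have ha : √((1 + z) / 2) ^ 2 = (1 + z) / 2 := Real.sq_sqrt (by linarith)
  have hb : √((1 - z) / 2) ^ 2 = (1 - z) / 2 := Real.sq_sqrt (by linarith)
  refine ⟨√((1 + z) / 2), √((1 - z) / 2), by rw [ha, hb]; ring, by rw [ha, hb]; ring, ?_⟩
  refine (sq_eq_sq₀ (by positivity) hr0).mp ?_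
  rw [mul_pow, mul_pow, ha, hb]
  linear_combination -hz

/-- Pure state transformations via IO: the pure state `ρ(√(1-r²), r)` can be
transformed by an incoherent operation into the pure state `ρ(√(1-r'²), r')`
if and only if `r' ≤ r`, i.e. iff the `l₁`-coherence does not increase. -/
theorem pure_state_io_transformation (r r' : ℝ)
    (hr : r ∈ Set.Icc (0 : ℝ) 1) (hr' : r' ∈ Set.Icc (0 : ℝ) 1) :
    (∃ (n : ℕ) (K : Fin n → Matrix (Fin 2) (Fin 2) ℂ),
      (∀ i, Incoherent (K i)) ∧ (∑ i, (K i)ᴴ * K i = 1) ∧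
      ∑ i, K i * qubit (Real.sqrt (1 - r ^ 2)) r * (K i)ᴴ
        = qubit (Real.sqrt (1 - r' ^ 2)) r') ↔ r' ≤ r := by
  obtain ⟨hr0, hr1⟩ := hr
  obtain ⟨hr'0, hr'1⟩ := hr'
  constructor
  · rintro ⟨n, K, hK, hKraus, hmap⟩
    have h := norm_sum_mul_mul_conjTranspose_apply_zero_one_le hK hKraus
      (qubit_isHermitian (√(1 - r ^ 2)) r)
    rw [hmap, qubit_apply_zero_one, qubit_apply_zero_one, Complex.norm_of_nonneg (by positivity),
      Complex.norm_of_nonneg (by positivity)] at h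
    linarith
  intro hle
  rcases hle.eq_or_lt with rfl | hlt
  · exact ⟨1, ![1], by simp [Incoherent.one], by simp, by simp⟩
  obtain ⟨a, b, hab, hz, hr⟩ := exists_amplitudes_of_mem_Icc hr0 hr1
  obtain ⟨a', b', ha'b', hz', hr'⟩ := exists_amplitudes_of_mem_Icc hr'0 hr'1
  have hz'pos : 0 < √(1 - r' ^ 2) := Real.sqrt_pos.2 (by nlinarith)
  have hzz' : √(1 - r ^ 2) ≤ √(1 - r' ^ 2) := Real.sqrt_le_sqrt (by nlinarith)
  have hab0 : a * b ≠ 0 := by intro h; nlinarith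
  rw [← hz, ← hz', ← hr, ← hr', qubit_eq_vecMulVec hab, qubit_eq_vecMulVec ha'b']
  exact exists_incoherent_kraus_of_sq_le (left_ne_zero_of_mul hab0) (right_ne_zero_of_mul hab0)
    hab ha'b' (by linarith [Real.sqrt_nonneg (1 - r ^ 2)]) (by linarith) (by linarith)
end
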